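/- Let $S_r = \{\Theta \in \mathbb{R}^{d_1 \times d_2} : \mathrm{rank}(\Theta) \le r, \|\Theta\|_F \le 1\}$. Then for any $\epsilon \in (0,1]$ there exists an $\epsilon$-net $\bar{S}_r \subseteq S_r$ for the Frobenius norm with cardinality $|\bar{S}_r| \le (9/\epsilon)^{(d_1+d_2+1)r}$. -/

import Mathlib

/-!
If `rank Θ ≤ r` and `p = min r d₁`, the columns of `Θ` lie in a `p`-dimensional subspace of
`ℝ^d₁`; choosing an isometry `U : ℝ^p → ℝ^d₁` onto it gives `Θ = U C` with `‖C‖_F = ‖Θ‖_F`.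
Conversely `U C` has rank at most `p` and `‖U C‖_F ≤ ‖U‖ ‖C‖_F`. So, viewing a matrix as the
`ℓ²`-family of its columns, `S_r` is the image of the product of two unit balls (operator norm
for `U`, Frobenius norm for `C`) under the bilinear map `(U, C) ↦ U C` of norm at most `1`.
A maximal `ε/2`-separated subset of a unit ball of dimension `n` has at most `(1 + 4/ε)^n`
points by comparing volumes, and is an `ε/2`-net; the images of pairs from the two nets form
an `ε`-net of `S_r` of size `(1 + 4/ε)^(p (d₁ + d₂)) ≤ (9/ε)^((d₁ + d₂ + 1) r)`.
-/

open scoped BigOperators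

noncomputable def frob {d₁ d₂ : ℕ} (A : Matrix (Fin d₁) (Fin d₂) ℝ) : ℝ :=
  Real.sqrt (∑ i, ∑ j, (A i j) ^ 2)

open Metric MeasureTheory Module
open scoped NNReal ENNReal

theorem Metric.isCover_iff_forall_exists_dist_le {X : Type*} [PseudoMetricSpace X] {ε : ℝ≥0}
    {s N : Set X} : IsCover ε s N ↔ ∀ x ∈ s, ∃ y ∈ N, dist x y ≤ ε := by
  simp [isCover_iff_subset_iUnion_closedBall, Set.subset_def]

section Packing

variable {E : Type*} [NormedAddCommGroup E] [NormedSpace ℝ E] [FiniteDimensional ℝ E]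

/- The closed `η/2`-balls around the points are disjoint and lie in the ball of radius
`1 + η/2`; comparing Haar measures gives the bound. -/
theorem card_le_of_isSeparated_of_subset_closedBall {η : ℝ≥0} (hη : 0 < η) {C : Finset E}
    (hC : (C : Set E) ⊆ closedBall 0 1) (hsep : IsSeparated η (C : Set E)) :
    (C.card : ℝ) ≤ (1 + 2 / η) ^ finrank ℝ E := by
  let _ : MeasurableSpace E := borel E
  have _ : BorelSpace E := ⟨rfl⟩
  set μ : Measure E := (finBasis ℝ E).addHaar
  have hdisj : (C : Set E).PairwiseDisjoint fun t => closedBall t (η / 2) := by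
    intro x hx y hy hxy
    apply closedBall_disjoint_closedBall
    have hxy' : (η : ℝ≥0∞) < edist x y := hsep hx hy hxy
    rw [edist_nndist, ENNReal.coe_lt_coe] at hxy'
    rw [add_halves, ← coe_nndist]
    exact_mod_cast hxy'
  have hunion : (⋃ t ∈ C, closedBall t (η / 2)) ⊆ closedBall (0 : E) (1 + η / 2) := by
    simp only [Set.iUnion_subset_iff]
    intro t ht z hz
    have ht1 : dist t 0 ≤ 1 := hC ht
    have hzt : dist z t ≤ η / 2 := hz
    exact (dist_triangle z t 0).trans (by linarith)
  have hvol : (C.card : ℝ) * (η / 2) ^ finrank ℝ E * μ.real (closedBall 0 1)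
      ≤ (1 + η / 2) ^ finrank ℝ E * μ.real (closedBall 0 1) := by
    calc (C.card : ℝ) * (η / 2) ^ finrank ℝ E * μ.real (closedBall 0 1)
        = ∑ t ∈ C, μ.real (closedBall t (η / 2)) := by
          simp [μ.addHaar_real_closedBall' _ (by positivity : (0 : ℝ) ≤ η / 2), mul_assoc]
      _ = μ.real (⋃ t ∈ C, closedBall t (η / 2)) :=
          (measureReal_biUnion_finset hdisj (fun _ _ => measurableSet_closedBall)
            fun _ _ => measure_closedBall_lt_top.ne).symm
      _ ≤ μ.real (closedBall 0 (1 + η / 2)) := measureReal_mono hunion measure_closedBall_lt_top.ne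
      _ = (1 + η / 2) ^ finrank ℝ E * μ.real (closedBall 0 1) :=
          μ.addHaar_real_closedBall' _ (by positivity)
  have hball : 0 < μ.real (closedBall (0 : E) 1) :=
    ENNReal.toReal_pos (measure_closedBall_pos μ 0 one_pos).ne' measure_closedBall_lt_top.ne
  have hcard := le_of_mul_le_mul_right hvol hball
  calc (C.card : ℝ) ≤ (1 + η / 2) ^ finrank ℝ E / (η / 2) ^ finrank ℝ E := by
        rwa [le_div_iff₀ (by positivity)]
    _ = (1 + 2 / η) ^ finrank ℝ E := by
        rw [← div_pow]
        congr 1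
        field_simp
        ring

theorem exists_finset_subset_isCover_card_le {S : Set E} (hS : S ⊆ closedBall 0 1) {η : ℝ≥0}
    (hη : 0 < η) :
    ∃ T : Finset E, ↑T ⊆ S ∧ IsCover η S T ∧ (T.card : ℝ) ≤ (1 + 2 / η) ^ finrank ℝ E := by
  set N := ⌊(1 + 2 / (η : ℝ)) ^ finrank ℝ E⌋₊
  have hsep_le : ∀ C ⊆ S, IsSeparated η C → C.encard ≤ N := by
    intro C hCS hC
    by_contra! hN
    obtain ⟨t, htC, ht⟩ := Set.exists_subset_encard_eq (k := (N + 1 : ℕ))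
      (by exact_mod_cast Order.add_one_le_of_lt hN)
    have htfin : t.Finite := Set.finite_of_encard_eq_coe ht
    have hcard := card_le_of_isSeparated_of_subset_closedBall hη (C := htfin.toFinset)
      (by simpa using htC.trans (hCS.trans hS)) (by simpa using hC.subset htC)
    rw [← Set.ncard_eq_toFinset_card t htfin, Set.ncard_def, ht, ENat.toNat_natCast] at hcard
    exact (Nat.lt_floor_add_one ((1 + 2 / (η : ℝ)) ^ finrank ℝ E)).not_ge
      (by exact_mod_cast hcard)
  have hpack : packingNumber η S ≠ ⊤ :=
    ne_top_of_le_ne_top (ENat.natCast_ne_top N) (iSup₂_le fun C hCS => iSup_le (hsep_le C hCS))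
  have hfin : (maximalSeparatedSet η S).Finite :=
    Set.finite_of_encard_le_coe
      (hsep_le _ maximalSeparatedSet_subset isSeparated_maximalSeparatedSet)
  refine ⟨hfin.toFinset, by simpa using maximalSeparatedSet_subset,
    by simpa using isCover_maximalSeparatedSet hpack, ?_⟩
  exact card_le_of_isSeparated_of_subset_closedBall hη
    (by simpa using maximalSeparatedSet_subset.trans hS)
    (by simpa using isSeparated_maximalSeparatedSet)


variable {F G : Type*} [NormedAddCommGroup F] [NormedSpace ℝ F] [FiniteDimensional ℝ F]
  [NormedAddCommGroup G] [NormedSpace ℝ G]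

theorem exists_finset_subset_isCover_image2_card_le (B : E →L[ℝ] F →L[ℝ] G) (hB : ‖B‖ ≤ 1)
    {η : ℝ≥0} (hη : 0 < η) :
    ∃ T : Finset G, ↑T ⊆ Set.image2 (fun x y => B x y) (closedBall 0 1) (closedBall 0 1) ∧
      IsCover (2 * η) (Set.image2 (fun x y => B x y) (closedBall 0 1) (closedBall 0 1)) T ∧
      (T.card : ℝ) ≤ (1 + 2 / η) ^ (finrank ℝ E + finrank ℝ F) := by
  classical
  obtain ⟨TE, hTE, hcovE, hcardE⟩ :=
    exists_finset_subset_isCover_card_le (subset_refl (closedBall (0 : E) 1)) hη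
  obtain ⟨TF, hTF, hcovF, hcardF⟩ :=
    exists_finset_subset_isCover_card_le (subset_refl (closedBall (0 : F) 1)) hη
  rw [isCover_iff_forall_exists_dist_le] at hcovE hcovF
  have hB_le (x : E) (y : F) : ‖B x y‖ ≤ ‖x‖ * ‖y‖ := calc
    ‖B x y‖ ≤ ‖B‖ * ‖x‖ * ‖y‖ := B.le_opNorm₂ x y
    _ ≤ 1 * ‖x‖ * ‖y‖ := by gcongr
    _ = ‖x‖ * ‖y‖ := by rw [one_mul]
  refine ⟨Finset.image₂ (fun x y => B x y) TE TF, ?_, ?_, ?_⟩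
  · rw [Finset.coe_image₂]
    exact Set.image2_subset hTE hTF
  · rw [isCover_iff_forall_exists_dist_le]
    rintro _ ⟨x, hx, y, hy, rfl⟩
    obtain ⟨x', hx', hxx'⟩ := hcovE x hx
    obtain ⟨y', hy', hyy'⟩ := hcovF y hy
    refine ⟨B x' y', Finset.mem_image₂_of_mem hx' hy', ?_⟩
    have hy1 : ‖y‖ ≤ 1 := mem_closedBall_zero_iff.mp hy
    have hx'1 : ‖x'‖ ≤ 1 := mem_closedBall_zero_iff.mp (hTE hx')
    rw [dist_eq_norm] at hxx' hyy'
    calc dist (B x y) (B x' y') ≤ ‖B (x - x') y‖ + ‖B x' (y - y')‖ := by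
          rw [dist_eq_norm, map_sub, sub_apply, map_sub]
          exact (norm_sub_le_norm_sub_add_norm_sub _ _ _)
      _ ≤ η * 1 + 1 * η := add_le_add
          ((hB_le _ _).trans (mul_le_mul hxx' hy1 (norm_nonneg _) η.2))
          ((hB_le _ _).trans (mul_le_mul hx'1 hyy' (norm_nonneg _) zero_le_one))
      _ = (2 * η : ℝ≥0) := by push_cast; ring
  · calc ((Finset.image₂ (fun x y => B x y) TE TF).card : ℝ) ≤ TE.card * TF.card := by
          exact_mod_cast Finset.card_image₂_le (fun x y => B x y) TE TF
      _ ≤ (1 + 2 / η) ^ finrank ℝ E * (1 + 2 / η) ^ finrank ℝ F :=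
          mul_le_mul hcardE hcardF (Nat.cast_nonneg _) (by positivity)
      _ = (1 + 2 / η) ^ (finrank ℝ E + finrank ℝ F) := (pow_add _ _ _).symm

end Packing

section CompLeft

variable {ι E F : Type*} [Fintype ι] [NormedAddCommGroup E] [NormedSpace ℝ E]
  [NormedAddCommGroup F] [NormedSpace ℝ F]

theorem PiLp.norm_compLeft_le (u : F →L[ℝ] E) (c : PiLp 2 fun _ : ι => F) :
    ‖(WithLp.toLp 2 fun i => u (c i) : PiLp 2 fun _ : ι => E)‖ ≤ ‖u‖ * ‖c‖ := by
  rw [PiLp.norm_eq_of_L2, PiLp.norm_eq_of_L2, ← Real.sqrt_sq (norm_nonneg u),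
    ← Real.sqrt_mul (sq_nonneg _), Finset.mul_sum]
  refine Real.sqrt_le_sqrt (Finset.sum_le_sum fun i _ => ?_)
  rw [← mul_pow]
  exact pow_le_pow_left₀ (norm_nonneg _) (u.le_opNorm (c i)) 2

noncomputable def PiLp.compLeftL :
    (F →L[ℝ] E) →L[ℝ] (PiLp 2 fun _ : ι => F) →L[ℝ] PiLp 2 fun _ : ι => E :=
  LinearMap.mkContinuous₂
    (LinearMap.mk₂ ℝ (fun u c => WithLp.toLp 2 fun i => u (c i))
      (fun _ _ _ => by ext; simp) (fun _ _ _ => by ext; simp)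
      (fun _ _ _ => by ext; simp) (fun _ _ _ => by ext; simp))
    1 fun u c => by simpa using PiLp.norm_compLeft_le u c

@[simp]
theorem PiLp.compLeftL_apply_apply (u : F →L[ℝ] E) (c : PiLp 2 fun _ : ι => F) (i : ι) :
    compLeftL u c i = u (c i) := rfl

theorem PiLp.norm_compLeftL_le :
    ‖(compLeftL : (F →L[ℝ] E) →L[ℝ] (PiLp 2 fun _ : ι => F) →L[ℝ] _)‖ ≤ 1 :=
  LinearMap.mkContinuous₂_norm_le _ zero_le_one _

end CompLeft

namespace Matrix

variable {m n : Type*}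

noncomputable def toEuclideanCols : Matrix m n ℝ ≃ₗ[ℝ] PiLp 2 fun _ : n => EuclideanSpace ℝ m :=
  ((transposeLinearEquiv m n ℝ ℝ).trans
    (LinearEquiv.piCongrRight fun _ => (WithLp.linearEquiv 2 ℝ (m → ℝ)).symm)).trans
    (WithLp.linearEquiv 2 ℝ (n → EuclideanSpace ℝ m)).symm

@[simp]
theorem toEuclideanCols_apply_apply (A : Matrix m n ℝ) (j : n) (i : m) :
    toEuclideanCols A j i = A i j := rfl

theorem rank_eq_finrank_span_toEuclideanCols [Fintype n] (A : Matrix m n ℝ) :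
    A.rank = finrank ℝ (Submodule.span ℝ (Set.range (toEuclideanCols A))) := by
  have hcols : Set.range (toEuclideanCols A) =
      (WithLp.linearEquiv 2 ℝ (m → ℝ)).symm '' Set.range A.col := by
    rw [← Set.range_comp]
    rfl
  rw [rank_eq_finrank_span_cols, hcols, ← LinearEquiv.coe_coe, Submodule.span_image,
    LinearEquiv.finrank_map_eq]

end Matrix

theorem frob_eq_norm_toEuclideanCols {d₁ d₂ : ℕ} (A : Matrix (Fin d₁) (Fin d₂) ℝ) :
    frob A = ‖Matrix.toEuclideanCols A‖ := by
  rw [frob, PiLp.norm_eq_of_L2, Finset.sum_comm]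
  congr 1
  refine Finset.sum_congr rfl fun j _ => ?_
  rw [EuclideanSpace.norm_eq, Real.sq_sqrt (by positivity)]
  simp

theorem Submodule.exists_le_finrank_eq {K V : Type*} [DivisionRing K] [AddCommGroup V]
    [Module K V] [FiniteDimensional K V] (W : Submodule K V) {p : ℕ} (hWp : finrank K W ≤ p)
    (hp : p ≤ finrank K V) : ∃ W' : Submodule K V, W ≤ W' ∧ finrank K W' = p := by
  induction p, hWp using Nat.le_induction with
  | base => exact ⟨W, le_rfl, rfl⟩
  | succ q _ ih =>
    obtain ⟨W', hWW', hW'⟩ := ih (Nat.le_of_succ_le hp)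
    have hW'top : W' ≠ ⊤ := fun h => by
      rw [h, finrank_top] at hW'
      omega
    obtain ⟨v, hv⟩ : ∃ v, v ∉ W' := by
      by_contra! h
      exact hW'top (eq_top_iff.2 fun v _ => h v)
    exact ⟨W' ⊔ K ∙ v, hWW'.trans le_sup_left, by rw [finrank_sup_span_singleton hv, hW']⟩

theorem exists_linearIsometry_le_range {𝕜 E : Type*} [RCLike 𝕜] [NormedAddCommGroup E]
    [InnerProductSpace 𝕜 E] [FiniteDimensional 𝕜 E] (W : Submodule 𝕜 E) {p : ℕ}
    (hWp : finrank 𝕜 W ≤ p) (hp : p ≤ finrank 𝕜 E) :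
    ∃ U : EuclideanSpace 𝕜 (Fin p) →ₗᵢ[𝕜] E, W ≤ LinearMap.range U.toLinearMap := by
  obtain ⟨W', hWW', hW'⟩ := W.exists_le_finrank_eq hWp hp
  let b : OrthonormalBasis (Fin p) 𝕜 W' := (stdOrthonormalBasis 𝕜 W').reindex (finCongr hW')
  refine ⟨W'.subtypeₗᵢ.comp b.repr.symm.toLinearIsometry, fun w hw => ⟨b.repr ⟨w, hWW' hw⟩, ?_⟩⟩
  simp

theorem exists_compLeftL_eq {ι E : Type*} [Fintype ι] [NormedAddCommGroup E]
    [InnerProductSpace ℝ E] [FiniteDimensional ℝ E] {p : ℕ} (v : PiLp 2 fun _ : ι => E)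
    (hv : finrank ℝ (Submodule.span ℝ (Set.range v)) ≤ p) (hp : p ≤ finrank ℝ E) :
    ∃ (u : EuclideanSpace ℝ (Fin p) →L[ℝ] E) (c : PiLp 2 fun _ : ι => EuclideanSpace ℝ (Fin p)),
      ‖u‖ ≤ 1 ∧ ‖c‖ = ‖v‖ ∧ PiLp.compLeftL u c = v := by
  obtain ⟨U, hU⟩ := exists_linearIsometry_le_range _ hv hp
  choose c hc using fun j => hU (Submodule.subset_span ⟨j, rfl⟩)
  have hc' (j : ι) : U (c j) = v j := hc j
  refine ⟨U.toContinuousLinearMap, WithLp.toLp 2 c, U.norm_toContinuousLinearMap_le, ?_, ?_⟩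
  · simp only [PiLp.norm_eq_of_L2, ← hc', LinearIsometry.norm_map]
  · ext j : 1
    exact hc' j

theorem image_toEuclideanCols_setOf_rank_le_frob_le (d₁ d₂ r : ℕ) :
    Matrix.toEuclideanCols '' {Θ : Matrix (Fin d₁) (Fin d₂) ℝ | Θ.rank ≤ r ∧ frob Θ ≤ 1} =
      Set.image2 (fun u c => PiLp.compLeftL u c)
        (closedBall (0 : EuclideanSpace ℝ (Fin (min r d₁)) →L[ℝ] EuclideanSpace ℝ (Fin d₁)) 1)
        (closedBall 0 1) := by
  ext v
  constructor
  · rintro ⟨Θ, ⟨hrank, hfrob⟩, rfl⟩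
    replace hrank := le_min hrank Θ.rank_le_height
    rw [Matrix.rank_eq_finrank_span_toEuclideanCols] at hrank
    obtain ⟨u, c, hu, hc, huc⟩ := exists_compLeftL_eq _ hrank (by simp)
    refine ⟨u, mem_closedBall_zero_iff.2 hu, c, mem_closedBall_zero_iff.2 ?_, huc⟩
    rwa [hc, ← frob_eq_norm_toEuclideanCols]
  · rintro ⟨u, hu, c, hc, rfl⟩
    let uₗ : EuclideanSpace ℝ (Fin (min r d₁)) →ₗ[ℝ] EuclideanSpace ℝ (Fin d₁) := u
    refine ⟨Matrix.toEuclideanCols.symm (PiLp.compLeftL u c), ⟨?_, ?_⟩, by simp⟩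
    · rw [Matrix.rank_eq_finrank_span_toEuclideanCols, LinearEquiv.apply_symm_apply]
      calc finrank ℝ (Submodule.span ℝ (Set.range (PiLp.compLeftL u c)))
          ≤ finrank ℝ (LinearMap.range uₗ) := by
            refine Submodule.finrank_mono (Submodule.span_le.2 ?_)
            rintro _ ⟨j, rfl⟩
            exact LinearMap.mem_range_self uₗ (c j)
        _ ≤ min r d₁ := by simpa using LinearMap.finrank_range_le uₗ
        _ ≤ r := min_le_left r d₁
    · rw [frob_eq_norm_toEuclideanCols, LinearEquiv.apply_symm_apply]
      calc ‖PiLp.compLeftL u c‖ ≤ ‖u‖ * ‖c‖ := PiLp.norm_compLeft_le u c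
        _ ≤ 1 * 1 := mul_le_mul (mem_closedBall_zero_iff.1 hu) (mem_closedBall_zero_iff.1 hc)
            (norm_nonneg _) zero_le_one
        _ = 1 := one_mul 1

theorem finrank_euclideanSpace_continuousLinearMap (p q : ℕ) :
    finrank ℝ (EuclideanSpace ℝ (Fin p) →L[ℝ] EuclideanSpace ℝ (Fin q)) = p * q := by
  rw [← (LinearMap.toContinuousLinearMap :
    (EuclideanSpace ℝ (Fin p) →ₗ[ℝ] EuclideanSpace ℝ (Fin q)) ≃ₗ[ℝ] _).finrank_eq,
    finrank_linearMap, finrank_euclideanSpace_fin, finrank_euclideanSpace_fin]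

theorem finrank_piLp_euclideanSpace (p q : ℕ) :
    finrank ℝ (PiLp 2 fun _ : Fin q => EuclideanSpace ℝ (Fin p)) = q * p := by
  rw [(WithLp.linearEquiv 2 ℝ _).finrank_eq, finrank_pi_fintype]
  simp

theorem one_add_four_div_pow_le {ε : ℝ} (hε : 0 < ε) (hε1 : ε ≤ 1) {d₁ d₂ p r : ℕ} (hpr : p ≤ r) :
    (1 + 4 / ε) ^ (p * d₁ + d₂ * p) ≤ (9 / ε) ^ ((d₁ + d₂ + 1) * r) := calc
  (1 + 4 / ε) ^ (p * d₁ + d₂ * p) ≤ (9 / ε) ^ (p * d₁ + d₂ * p) := by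
    gcongr
    rw [le_div_iff₀ hε, add_mul, div_mul_cancel₀ _ hε.ne']
    linarith
  _ ≤ (9 / ε) ^ ((d₁ + d₂ + 1) * r) := by
    refine pow_le_pow_right₀ ((one_le_div hε).2 (by linarith)) ?_
    nlinarith [Nat.mul_le_mul_right d₁ hpr, Nat.mul_le_mul_left d₂ hpr]

/-- Covering number for low-rank matrices: the set
`S_r = {Θ : rank Θ ≤ r, ‖Θ‖_F ≤ 1}` admits, for any `ε ∈ (0,1]`, an `ε`-net
`S̄_r ⊆ S_r` in Frobenius norm of cardinality at most `(9/ε)^((d₁+d₂+1) r)`. -/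
theorem low_rank_covering (d₁ d₂ r : ℕ) (ε : ℝ) (hε : 0 < ε) (hε1 : ε ≤ 1) :
    ∃ N : Finset (Matrix (Fin d₁) (Fin d₂) ℝ),
      (∀ A ∈ N, A.rank ≤ r ∧ frob A ≤ 1) ∧
      (N.card : ℝ) ≤ (9 / ε) ^ ((d₁ + d₂ + 1) * r) ∧
      ∀ Θ : Matrix (Fin d₁) (Fin d₂) ℝ, Θ.rank ≤ r → frob Θ ≤ 1 →
        ∃ A ∈ N, frob (Θ - A) ≤ ε := by
  classical
  set η : ℝ≥0 := ⟨ε / 2, by positivity⟩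
  have hη : (η : ℝ) = ε / 2 := rfl
  obtain ⟨T, hTS, hTcov, hTcard⟩ := exists_finset_subset_isCover_image2_card_le
    (PiLp.compLeftL : (EuclideanSpace ℝ (Fin (min r d₁)) →L[ℝ] EuclideanSpace ℝ (Fin d₁)) →L[ℝ]
      (PiLp 2 fun _ : Fin d₂ => EuclideanSpace ℝ (Fin (min r d₁))) →L[ℝ] _)
    PiLp.norm_compLeftL_le (η := η) (by rw [← NNReal.coe_pos, hη]; positivity)
  rw [← image_toEuclideanCols_setOf_rank_le_frob_le] at hTS hTcov
  rw [finrank_euclideanSpace_continuousLinearMap, finrank_piLp_euclideanSpace, hη,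
    div_div_eq_mul_div, show (2 : ℝ) * 2 = 4 by norm_num] at hTcard
  refine ⟨T.image Matrix.toEuclideanCols.symm, ?_, ?_, ?_⟩
  · intro A hA
    obtain ⟨v, hvT, rfl⟩ := Finset.mem_image.1 hA
    obtain ⟨Θ, hΘ, rfl⟩ := hTS hvT
    simpa using hΘ
  · calc ((T.image _).card : ℝ) ≤ T.card := by exact_mod_cast Finset.card_image_le
      _ ≤ _ := hTcard.trans (one_add_four_div_pow_le hε hε1 (min_le_left r d₁))
  · intro Θ hΘr hΘ
    obtain ⟨v, hvT, hv⟩ := (isCover_iff_forall_exists_dist_le.1 hTcov) _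
      (Set.mem_image_of_mem _ ⟨hΘr, hΘ⟩)
    refine ⟨_, Finset.mem_image_of_mem _ hvT, ?_⟩
    rw [frob_eq_norm_toEuclideanCols, map_sub, LinearEquiv.apply_symm_apply, ← dist_eq_norm]
    simpa [hη, mul_div_cancel₀] using hv
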